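/- arXiv:2011.08541 — 4 statements merged into one kernel-verified Lean document; each statement's English description precedes it below -/
import Mathlib

section
/- Let R : S → A → S → ℝ be a reward function, γ ∈ ℝ a discount factor, and φ : S → ℝ a potential, and let R̂ be the potential-based shaping of R by φ. Then for every trajectory τ = (s, a) of length L, the discounted rewards satisfy R̂(τ) = R(τ) + γ^L · φ(s_L) − φ(s_0). -/
/-!
The shaping term `γ φ(s') - φ(s)`, discounted by `γ^t`, becomes
`γ^(t+1) φ(s_{t+1}) - γ^t φ(s_t)`, so its contribution to the discounted reward telescopes
to `γ^L φ(s_L) - φ(s_0)`; the rest is linearity of the discounted reward in the reward function.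
-/

/-- The discounted reward of a trajectory `(s, a)` of length `L`:
`R(τ) = ∑_{t=0}^{L-1} γ^t · R(s_t, a_t, s_{t+1})`. -/
noncomputable def discReward {S A : Type*} (R : S → A → S → ℝ) (γ : ℝ) (L : ℕ)
    (s : Fin (L + 1) → S) (a : Fin L → A) : ℝ :=
  ∑ t : Fin L, γ ^ (t : ℕ) * R (s t.castSucc) (a t) (s t.succ)

theorem Fin.sum_univ_succ_sub_castSucc {M : Type*} [AddCommGroup M] {n : ℕ}
    (f : Fin (n + 1) → M) :
    ∑ i : Fin n, (f i.succ - f i.castSucc) = f (Fin.last n) - f 0 := by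
  rw [Finset.sum_sub_distrib, sub_eq_sub_iff_add_eq_add, add_comm, ← Fin.sum_univ_succ,
    Fin.sum_univ_castSucc, add_comm]

section
variable {S A : Type*}

theorem discReward_add (R R' : S → A → S → ℝ) (γ : ℝ) (L : ℕ) (s : Fin (L + 1) → S)
    (a : Fin L → A) :
    discReward (fun s a s' => R s a s' + R' s a s') γ L s a =
      discReward R γ L s a + discReward R' γ L s a := by
  simp only [discReward, mul_add, Finset.sum_add_distrib]

theorem discReward_potential (γ : ℝ) (φ : S → ℝ) (L : ℕ) (s : Fin (L + 1) → S)
    (a : Fin L → A) :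
    discReward (fun s (_ : A) s' => γ * φ s' - φ s) γ L s a =
      γ ^ L * φ (s (Fin.last L)) - φ (s 0) := by
  have telescope := Fin.sum_univ_succ_sub_castSucc fun t : Fin (L + 1) => γ ^ (t : ℕ) * φ (s t)
  simp only [Fin.val_succ, Fin.val_castSucc, Fin.val_last, Fin.val_zero, pow_zero, one_mul]
    at telescope
  rw [discReward, ← telescope]
  congr! 1 with t
  ring

end

/-- If `R̂` is the potential-based shaping of `R` by `φ`, then for every
trajectory `τ = (s, a)` of length `L`, `R̂(τ) = R(τ) + γ^L·φ(s_L) − φ(s_0)`. -/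
theorem discReward_shaped {S A : Type*} (R : S → A → S → ℝ) (γ : ℝ) (φ : S → ℝ)
    (L : ℕ) (s : Fin (L + 1) → S) (a : Fin L → A) :
    discReward (fun s a s' => R s a s' + γ * φ s' - φ s) γ L s a =
      discReward R γ L s a + γ ^ L * φ (s (Fin.last L)) - φ (s 0) := by
  simp only [add_sub_assoc]
  rw [discReward_add, discReward_potential]
end

section
/- Let R : S → A → S → ℝ be a reward function, γ ∈ ℝ a discount factor, and c ∈ ℝ a constant, and define R̂(s, a, s') = R(s, a, s') + c for all s, a, s'. Then for every expert trajectory τ of length L and every finite family (τ_j)_{j=1}^M of trajectories of length L with the same starting state as τ, the ρ-projections agree exactly: ρ_τ(R̂) = ρ_τ(R). -/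
/-- The ρ-projection of a reward function `R`, given an expert trajectory `(s, a)` of
length `L` and a family of `M` trajectories `(s' j, a' j)` of length `L`:
`ρ_τ(R) = exp(R(τ)) / (exp(R(τ)) + ∑_{j=1}^M exp(R(τ_j)))`. -/
noncomputable def rhoProj {S A : Type*} (γ : ℝ) (L M : ℕ)
    (s : Fin (L + 1) → S) (a : Fin L → A)
    (s' : Fin M → Fin (L + 1) → S) (a' : Fin M → Fin L → A)
    (R : S → A → S → ℝ) : ℝ :=
  Real.exp (discReward R γ L s a) /
    (Real.exp (discReward R γ L s a) +
      ∑ j : Fin M, Real.exp (discReward R γ L (s' j) (a' j)))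

theorem discReward_add_const {S A : Type*} (R : S → A → S → ℝ) (γ c : ℝ) (L : ℕ)
    (s : Fin (L + 1) → S) (a : Fin L → A) :
    discReward (fun x y z => R x y z + c) γ L s a =
      discReward R γ L s a + ∑ t : Fin L, γ ^ (t : ℕ) * c := by
  simp only [discReward, mul_add, Finset.sum_add_distrib]

theorem exp_div_exp_add_sum_exp_add_const {ι : Type*} (J : Finset ι) (x k : ℝ) (y : ι → ℝ) :
    Real.exp (x + k) / (Real.exp (x + k) + ∑ j ∈ J, Real.exp (y j + k)) =
      Real.exp x / (Real.exp x + ∑ j ∈ J, Real.exp (y j)) := by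
  simp only [Real.exp_add, ← Finset.sum_mul, ← add_mul]
  exact mul_div_mul_right _ _ (Real.exp_pos k).ne'

theorem rhoProj_eq_of_discReward_eq_add {S A : Type*} (γ : ℝ) (L M : ℕ)
    (s : Fin (L + 1) → S) (a : Fin L → A)
    (s' : Fin M → Fin (L + 1) → S) (a' : Fin M → Fin L → A)
    (R R' : S → A → S → ℝ) (k : ℝ)
    (h : ∀ u b, discReward R' γ L u b = discReward R γ L u b + k) :
    rhoProj γ L M s a s' a' R' = rhoProj γ L M s a s' a' R := by
  simp only [rhoProj, h]
  exact exp_div_exp_add_sum_exp_add_const _ _ _ _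

theorem rhoProj_const_translation_general {S A : Type*} (R : S → A → S → ℝ) (γ : ℝ) (c : ℝ)
    (L M : ℕ) (s : Fin (L + 1) → S) (a : Fin L → A)
    (s' : Fin M → Fin (L + 1) → S) (a' : Fin M → Fin L → A) :
    rhoProj γ L M s a s' a' (fun x y z => R x y z + c) = rhoProj γ L M s a s' a' R :=
  rhoProj_eq_of_discReward_eq_add γ L M s a s' a' R _ _ (discReward_add_const R γ c L)

/-- Translating a reward function by a constant `c` leaves the ρ-projection
unchanged, for any family of trajectories with the same starting state as the expert
trajectory. -/
theorem rhoProj_const_translation {S A : Type*} (R : S → A → S → ℝ) (γ : ℝ) (c : ℝ)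
    (L M : ℕ) (s : Fin (L + 1) → S) (a : Fin L → A)
    (s' : Fin M → Fin (L + 1) → S) (a' : Fin M → Fin L → A)
    (hstart : ∀ j : Fin M, s' j 0 = s 0) :
    rhoProj γ L M s a s' a' (fun x y z => R x y z + c) = rhoProj γ L M s a s' a' R :=
  rhoProj_const_translation_general R γ c L M s a s' a'
end

section
/- (Remark 1 / Appendix A) Let S and A be finite nonempty types, let P : S → A → S → ℝ be a transition kernel (P(s'|s,a) ≥ 0 and ∑_{s'} P(s'|s,a) = 1 for all s, a), let R₀ : S → A → S → ℝ, γ ∈ ℝ, and let Q₀ : S → A → ℝ satisfy the soft Bellman equation with the Boltzmann operator: Q₀(s,a) = ∑_{s'} P(s'|s,a) · (R₀(s,a,s') + γ · ∑_{a'} π(s',a') · Q₀(s',a')) for all s, a, where π(s,a) = exp(Q₀(s,a)) / ∑_{a''} exp(Q₀(s,a'')). Let φ : S → ℝ and define Q(s,a) = Q₀(s,a) − φ(s) and the shaped reward R(s,a,s') = R₀(s,a,s') + γ·φ(s') − φ(s). Then (i) the Boltzmann policy of Q equals that of Q₀, i.e., exp(Q(s,a)) / ∑_{a''} exp(Q(s,a''))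 = π(s,a) for all s, a, and (ii) Q satisfies the soft Bellman equation for the shaped reward: Q(s,a) = ∑_{s'} P(s'|s,a) · (R(s,a,s') + γ · ∑_{a'} π(s',a') · Q(s',a')) for all s, a. -/
/-!
Subtracting `φ s` from every action value at state `s` multiplies all Boltzmann weights at `s`
by the same factor `exp (-φ s)`, so the policy is unchanged. Since the policy and the
transition kernel are probability distributions, the shift `-φ s'` inside the soft value of
`s'` cancels the `+γ φ s'` of the shaped reward, and the remaining `-φ s` passes through the
expectation over `s'`.
-/

open Finset

noncomputable def softmax {ι : Type*} [Fintype ι] (f : ι → ℝ) (i : ι) : ℝ :=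
  Real.exp (f i) / ∑ j, Real.exp (f j)

theorem softmax_sub_const {ι : Type*} [Fintype ι] (f : ι → ℝ) (c : ℝ) :
    softmax (fun i => f i - c) = softmax f := by
  funext i
  simp only [softmax, Real.exp_sub, ← sum_div]
  exact div_div_div_cancel_right₀ (Real.exp_pos c).ne' _ _

theorem sum_softmax {ι : Type*} [Fintype ι] [Nonempty ι] (f : ι → ℝ) :
    ∑ i, softmax f i = 1 := by
  simp only [softmax, ← sum_div]
  exact div_self (sum_pos (fun i _ => Real.exp_pos (f i)) univ_nonempty).ne'

theorem sum_mul_sub_const_of_sum_eq_one {ι : Type*} [Fintype ι] {w : ι → ℝ}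
    (hw : ∑ i, w i = 1) (g : ι → ℝ) (c : ℝ) :
    ∑ i, w i * (g i - c) = ∑ i, w i * g i - c := by
  simp only [mul_sub, sum_sub_distrib, ← sum_mul, hw, one_mul]

theorem soft_bellman_potential_shaping_general {S A : Type*} [Fintype S] [Fintype A]
    [Nonempty A]
    (P : S → A → S → ℝ)
    (hP1 : ∀ s a, ∑ s' : S, P s a s' = 1)
    (R₀ : S → A → S → ℝ) (γ : ℝ) (Q₀ : S → A → ℝ)
    (π : S → A → ℝ)
    (hπ : ∀ s a, π s a = Real.exp (Q₀ s a) / ∑ a'' : A, Real.exp (Q₀ s a''))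
    (hQ₀ : ∀ s a, Q₀ s a =
      ∑ s' : S, P s a s' * (R₀ s a s' + γ * ∑ a' : A, π s' a' * Q₀ s' a'))
    (φ : S → ℝ) (Q : S → A → ℝ) (hQ : ∀ s a, Q s a = Q₀ s a - φ s)
    (R : S → A → S → ℝ) (hR : ∀ s a s', R s a s' = R₀ s a s' + γ * φ s' - φ s) :
    (∀ s a, Real.exp (Q s a) / (∑ a'' : A, Real.exp (Q s a'')) = π s a) ∧
      (∀ s a, Q s a =
        ∑ s' : S, P s a s' * (R s a s' + γ * ∑ a' : A, π s' a' * Q s' a')) := by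
  have hπ_softmax : ∀ s, π s = softmax (Q₀ s) := fun s => funext (hπ s)
  have hQ_fun : ∀ s, Q s = fun a => Q₀ s a - φ s := fun s => funext (hQ s)
  refine ⟨fun s a => ?_, fun s a => ?_⟩
  · rw [hQ_fun, hπ_softmax, ← softmax_sub_const (Q₀ s) (φ s)]
    rfl
  · have hvalue : ∀ s', ∑ a', π s' a' * Q s' a' = ∑ a', π s' a' * Q₀ s' a' - φ s' := by
      intro s'
      simp only [hQ]
      exact sum_mul_sub_const_of_sum_eq_one (by rw [hπ_softmax, sum_softmax]) _ _
    have htarget : ∀ s', R s a s' + γ * ∑ a', π s' a' * Q s' a' =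
        (R₀ s a s' + γ * ∑ a', π s' a' * Q₀ s' a') - φ s := by
      intro s'
      rw [hvalue, hR]
      ring
    simp only [htarget]
    rw [sum_mul_sub_const_of_sum_eq_one (hP1 s a), ← hQ₀, hQ]

/-- Remark 1 / Appendix A: Potential-based reward shaping for the soft
Bellman equation with the Boltzmann operator. If `Q₀` satisfies the soft Bellman equation
for `R₀` with Boltzmann policy `π`, and we define `Q(s,a) = Q₀(s,a) − φ(s)` and
`R(s,a,s') = R₀(s,a,s') + γ·φ(s') − φ(s)`, then (i) the Boltzmann policy of `Q` equals
`π`, and (ii) `Q` satisfies the soft Bellman equation for the shaped reward `R`. -/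
theorem soft_bellman_potential_shaping {S A : Type*} [Fintype S] [Fintype A]
    [Nonempty S] [Nonempty A]
    (P : S → A → S → ℝ)
    (hP0 : ∀ s a s', 0 ≤ P s a s') (hP1 : ∀ s a, ∑ s' : S, P s a s' = 1)
    (R₀ : S → A → S → ℝ) (γ : ℝ) (Q₀ : S → A → ℝ)
    (π : S → A → ℝ)
    (hπ : ∀ s a, π s a = Real.exp (Q₀ s a) / ∑ a'' : A, Real.exp (Q₀ s a''))
    (hQ₀ : ∀ s a, Q₀ s a =
      ∑ s' : S, P s a s' * (R₀ s a s' + γ * ∑ a' : A, π s' a' * Q₀ s' a'))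
    (φ : S → ℝ) (Q : S → A → ℝ) (hQ : ∀ s a, Q s a = Q₀ s a - φ s)
    (R : S → A → S → ℝ) (hR : ∀ s a s', R s a s' = R₀ s a s' + γ * φ s' - φ s) :
    (∀ s a, Real.exp (Q s a) / (∑ a'' : A, Real.exp (Q s a'')) = π s a) ∧
      (∀ s a, Q s a =
        ∑ s' : S, P s a s' * (R s a s' + γ * ∑ a' : A, π s' a' * Q s' a')) :=
  soft_bellman_potential_shaping_general P hP1 R₀ γ Q₀ π hπ hQ₀ φ Q hQ R hR
end

section
/- (Q-function form of Theorem 1, potential-based reward shaping) Let S and A be finite nonempty types, let P : S → A → S → ℝ be a transition kernel (P(s'|s,a) ≥ 0 and ∑_{s'} P(s'|s,a) = 1 for all s, a), let R₀ : S → A → S → ℝ, γ ∈ ℝ, and let Q₀ : S → A → ℝ satisfy the Bellman optimality equation Q₀(s,a) = ∑_{s'} P(s'|s,a) · (R₀(s,a,s') + γ · max_{a'} Q₀(s',a')) for all s, a. Let φ : S → ℝ and define Q(s,a) = Q₀(s,a) − φ(s) and the shaped reward R(s,a,s') = R₀(s,a,s') + γ·φ(s') − φ(s). Then (i) Q satisfies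 the Bellman optimality equation for the shaped reward: Q(s,a) = ∑_{s'} P(s'|s,a) · (R(s,a,s') + γ · max_{a'} Q(s',a')) for all s, a, and (ii) for every state s, the set of maximizing actions is unchanged: {a | ∀ a', Q(s,a') ≤ Q(s,a)} = {a | ∀ a', Q₀(s,a') ≤ Q₀(s,a)}. -/
/-!
Subtracting the potential `φ s'` from every action value at `s'` lowers the greedy value
`max_{a'} Q₀ s' a'` by exactly `φ s'`, so the term `γ φ s'` added to the reward is cancelled inside
the backup; since `P s a ·` sums to `1`, the remaining `- φ s` comes out of the expectation.
Greedy actions at `s` are unchanged because all values at `s` are shifted by the same constant.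
-/

open Finset

section Bellman

variable {S A 𝕜 : Type*} [Fintype S] [Fintype A] [Nonempty A]
  [CommRing 𝕜] [LinearOrder 𝕜] [IsOrderedRing 𝕜]

noncomputable def bellmanBackup (P R : S → A → S → 𝕜) (γ : 𝕜) (Q : S → A → 𝕜) (s : S) (a : A) :
    𝕜 :=
  ∑ s', P s a s' * (R s a s' + γ * univ.sup' univ_nonempty (Q s'))

theorem bellmanBackup_potential_shaping {P : S → A → S → 𝕜}
    (hP : ∀ s a, ∑ s', P s a s' = 1) (R : S → A → S → 𝕜) (γ : 𝕜) (Q : S → A → 𝕜) (φ : S → 𝕜)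
    (s : S) (a : A) :
    bellmanBackup P (fun s a s' => R s a s' + γ * φ s' - φ s) γ (fun s a => Q s a - φ s) s a =
      bellmanBackup P R γ Q s a - φ s := by
  have hmax : ∀ s', univ.sup' univ_nonempty (fun a => Q s' a - φ s') =
      univ.sup' univ_nonempty (Q s') - φ s' := fun s' => by
    simp only [sub_eq_add_neg, sup'_add]
  calc bellmanBackup P (fun s a s' => R s a s' + γ * φ s' - φ s) γ (fun s a => Q s a - φ s) s a
      = ∑ s', (P s a s' * (R s a s' + γ * univ.sup' univ_nonempty (Q s')) - P s a s' * φ s) := by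
        refine sum_congr rfl fun s' _ => ?_
        rw [hmax]
        ring
    _ = bellmanBackup P R γ Q s a - (∑ s', P s a s') * φ s := by
        rw [sum_sub_distrib, sum_mul, bellmanBackup]
    _ = bellmanBackup P R γ Q s a - φ s := by rw [hP, one_mul]

end Bellman

theorem bellman_potential_shaping_general {S A : Type*} [Fintype S] [Fintype A]
    [Nonempty A]
    (P : S → A → S → ℝ)
    (hP1 : ∀ s a, ∑ s' : S, P s a s' = 1)
    (R₀ : S → A → S → ℝ) (γ : ℝ) (Q₀ : S → A → ℝ)
    (hQ₀ : ∀ s a, Q₀ s a =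
      ∑ s' : S, P s a s' *
        (R₀ s a s' + γ * Finset.univ.sup' Finset.univ_nonempty (fun a' => Q₀ s' a')))
    (φ : S → ℝ) (Q : S → A → ℝ) (hQ : ∀ s a, Q s a = Q₀ s a - φ s)
    (R : S → A → S → ℝ) (hR : ∀ s a s', R s a s' = R₀ s a s' + γ * φ s' - φ s) :
    (∀ s a, Q s a =
      ∑ s' : S, P s a s' *
        (R s a s' + γ * Finset.univ.sup' Finset.univ_nonempty (fun a' => Q s' a'))) ∧
      (∀ s : S, {a : A | ∀ a' : A, Q s a' ≤ Q s a} =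
        {a : A | ∀ a' : A, Q₀ s a' ≤ Q₀ s a}) := by
  obtain rfl : Q = fun s a => Q₀ s a - φ s := funext₂ hQ
  obtain rfl : R = fun s a s' => R₀ s a s' + γ * φ s' - φ s := funext fun s => funext₂ (hR s)
  refine ⟨fun s a => ?_, fun s => ?_⟩
  · exact (congrArg (· - φ s) (hQ₀ s a)).trans
      (bellmanBackup_potential_shaping hP1 R₀ γ Q₀ φ s a).symm
  · simp only [sub_le_sub_iff_right]

/-- Q-function form of Theorem 1, potential-based reward shaping: If `Q₀`
satisfies the Bellman optimality equation for `R₀`, and we define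
`Q(s,a) = Q₀(s,a) − φ(s)` and the shaped reward `R(s,a,s') = R₀(s,a,s') + γ·φ(s') − φ(s)`,
then (i) `Q` satisfies the Bellman optimality equation for `R`, and (ii) for every state
the set of maximizing actions is unchanged. -/
theorem bellman_potential_shaping {S A : Type*} [Fintype S] [Fintype A]
    [Nonempty S] [Nonempty A]
    (P : S → A → S → ℝ)
    (hP0 : ∀ s a s', 0 ≤ P s a s') (hP1 : ∀ s a, ∑ s' : S, P s a s' = 1)
    (R₀ : S → A → S → ℝ) (γ : ℝ) (Q₀ : S → A → ℝ)
    (hQ₀ : ∀ s a, Q₀ s a =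
      ∑ s' : S, P s a s' *
        (R₀ s a s' + γ * Finset.univ.sup' Finset.univ_nonempty (fun a' => Q₀ s' a')))
    (φ : S → ℝ) (Q : S → A → ℝ) (hQ : ∀ s a, Q s a = Q₀ s a - φ s)
    (R : S → A → S → ℝ) (hR : ∀ s a s', R s a s' = R₀ s a s' + γ * φ s' - φ s) :
    (∀ s a, Q s a =
      ∑ s' : S, P s a s' *
        (R s a s' + γ * Finset.univ.sup' Finset.univ_nonempty (fun a' => Q s' a'))) ∧
      (∀ s : S, {a : A | ∀ a' : A, Q s a' ≤ Q s a} =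
        {a : A | ∀ a' : A, Q₀ s a' ≤ Q₀ s a}) :=
  bellman_potential_shaping_general P hP1 R₀ γ Q₀ hQ₀ φ Q hQ R hR
end
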